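/- In the Decision-Rec Rob SP construction of Theorem 4: every path X ∈ Φ with first-stage cost ∑_{e∈X} C_e = 0 consists of the arcs (s_1,t_1), (t_1,s_2), (s_2,t_2) followed by a simple t_2–t'_2 subpath using only arcs of the 𝕏-variable gadgets; for each i ∈ [n] this subpath traverses exactly one of the two internally node-disjoint paths of the x_i gadget, and therefore uniquely determines a 0-1 assignment x of 𝕏 (x_i := 1 if the lower path is used, x_i := 0 if the upper path is used). -/

import Mathlib

namespace RRSP

/-- A simple directed `s`–`t` path in the digraph with arc set `A`, given as
the list of its (pairwise distinct) vertices. -/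
def IsPath {V : Type*} (A : Set (V × V)) (s t : V) (p : List V) : Prop :=
  List.Chain' (fun u v => (u, v) ∈ A) p ∧ p.head? = some s ∧ p.getLast? = some t ∧ p.Nodup

/-- The arc set of a path given by its vertex list. -/
def pathArcs {V : Type*} [DecidableEq V] (p : List V) : Finset (V × V) :=
  (p.zip p.tail).toFinset

/-- `Φ`: the set of all simple `s`–`t` paths, each identified with its arc set. -/
def Phi {V : Type*} [DecidableEq V] (A : Set (V × V)) (s t : V) : Set (Finset (V × V)) :=
  { X | ∃ p : List V, IsPath A s t p ∧ pathArcs p = X }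

/-- A CNF formula with `m` clauses over variables `Fin N`: clause `j` is a list
of literals.  An assignment satisfies the formula if every clause contains a
true literal. -/
def Satisfies {m N : ℕ} (F : Fin m → List (Fin N × Bool)) (a : Fin N → Bool) : Prop :=
  ∀ j, ∃ l ∈ F j, a l.1 = l.2

/-- Nodes of the variable–clause graph built from a CNF formula with `m`
clauses over `N` variables whose gadgets are chained:
`junction i` are the `N+1` junction nodes between consecutive gadgets
(`junction 0` is the entry of the first gadget, `junction N` the exit of the
last one), `upper i j` (resp. `lower i j`) is the internal node `v̄^{C_j}`
(resp. `v^{C_j}`) of the gadget of variable `i`, `cl1 j` and `cl2 j` are the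
clause nodes `C_j^{(1)}`, `C_j^{(2)}`, and `s1`, `t1` are the terminals of the
clause path. -/
inductive Node (N m : ℕ) where
  | junction : Fin (N + 1) → Node N m
  | upper : Fin N → Fin m → Node N m
  | lower : Fin N → Fin m → Node N m
  | cl1 : Fin m → Node N m
  | cl2 : Fin m → Node N m
  | s1 : Node N m
  | t1 : Node N m
deriving DecidableEq

variable {N m : ℕ}

/-- The `k`-th node on the upper path of the gadget of variable `i`
(`k = 0` is the entry junction, `k = m+1` the exit junction). -/
def upNode (i : Fin N) (k : Fin (m + 2)) : Node N m :=
  if h0 : k.val = 0 then .junction i.castSucc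
  else if h1 : k.val = m + 1 then .junction i.succ
  else .upper i ⟨k.val - 1, by have := k.isLt; omega⟩

/-- The `k`-th node on the lower path of the gadget of variable `i`. -/
def lowNode (i : Fin N) (k : Fin (m + 2)) : Node N m :=
  if h0 : k.val = 0 then .junction i.castSucc
  else if h1 : k.val = m + 1 then .junction i.succ
  else .lower i ⟨k.val - 1, by have := k.isLt; omega⟩

/-- The `m+1` arcs of the upper path of the gadget of variable `i`
(traversing it encodes assigning `i := 0`). -/
def upperArcs (i : Fin N) : Set (Node N m × Node N m) :=
  Set.range fun k : Fin (m + 1) => (upNode i k.castSucc, upNode i k.succ)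

/-- The `m+1` arcs of the lower path of the gadget of variable `i`
(traversing it encodes assigning `i := 1`). -/
def lowerArcs (i : Fin N) : Set (Node N m × Node N m) :=
  Set.range fun k : Fin (m + 1) => (lowNode i k.castSucc, lowNode i k.succ)

/-- All arcs of the variable gadgets. -/
def gadgetArcs : Set (Node N m × Node N m) := ⋃ i, upperArcs i ∪ lowerArcs i

/-- The literal arcs of clause `j`: for a positive literal `v` the arcs
`(C_j^{(1)}, v̄^{C_j})` and `(v̄^{C_j}, C_j^{(2)})`, for a negative literal `¬v`
the arcs `(C_j^{(1)}, v^{C_j})` and `(v^{C_j}, C_j^{(2)})`. -/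
def litArcs (F : Fin m → List (Fin N × Bool)) (j : Fin m) :
    Set (Node N m × Node N m) :=
  { e | ∃ l ∈ F j,
      (l.2 = true ∧ (e = (.cl1 j, .upper l.1 j) ∨ e = (.upper l.1 j, .cl2 j))) ∨
      (l.2 = false ∧ (e = (.cl1 j, .lower l.1 j) ∨ e = (.lower l.1 j, .cl2 j))) }

/-- The arcs `(s1, C_1^{(1)})`, `(C_m^{(2)}, t1)` and `(C_j^{(2)}, C_{j+1}^{(1)})`
chaining the clause nodes. -/
def chainArcs : Set (Node N m × Node N m) :=
  { e | (∃ h : 0 < m, e = (.s1, .cl1 ⟨0, h⟩)) ∨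
        (∃ h : 0 < m, e = (.cl2 ⟨m - 1, by omega⟩, .t1)) ∨
        (∃ j j' : Fin m, j'.val = j.val + 1 ∧ e = (.cl2 j, .cl1 j')) }

/-- The arcs of the variable–clause graph built from the formula `F`. -/
def baseArcs (F : Fin m → List (Fin N × Bool)) : Set (Node N m × Node N m) :=
  gadgetArcs ∪ (⋃ j, litArcs F j) ∪ chainArcs

/-- `s₂`: the entry of the first variable gadget. -/
def s2 : Node N m := .junction 0

/-- The arc set of the variable path encoding the assignment `a`: the lower
path of the gadget of `i` if `a i = 1`, its upper path if `a i = 0`. -/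
def assignArcs (a : Fin N → Bool) : Set (Node N m × Node N m) :=
  ⋃ i, if a i then lowerArcs i else upperArcs i

/-! Theorem 4 construction: the variables are `Fin (3*n)`, the first `n`
being `𝕐`, the next `n` being `ℤ` and the last `n` being `𝕏`; the `𝕐`- and
`ℤ`-gadgets are chained from `s₂ = junction 0` to `t₂ = junction (2*n)` and
the `𝕏`-gadgets from `t₂` to the new terminal `t₂' = junction (3*n)`. -/

/-- The index in `Fin (3*n)` of the variable `y_i`. -/
def yIdx3 (n : ℕ) (i : Fin n) : Fin (3 * n) := ⟨i.val, by have := i.isLt; omega⟩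

/-- The index in `Fin (3*n)` of the variable `x_i`. -/
def xIdx3 (n : ℕ) (i : Fin n) : Fin (3 * n) := ⟨2 * n + i.val, by have := i.isLt; omega⟩

/-- `t₂`: the junction between the `ℤ`-gadgets and the `𝕏`-gadgets. -/
def t2m (n m : ℕ) : Node (3 * n) m := .junction ⟨2 * n, by omega⟩

/-- `t₂'`: the exit of the last `𝕏`-gadget, the destination node. -/
def t2' (n m : ℕ) : Node (3 * n) m := .junction (Fin.last (3 * n))

/-- `e_{y_i}`: the distinguished arc of the lower path of the gadget of `y_i`. -/
def ey3 (n m : ℕ) (i : Fin n) : Node (3 * n) m × Node (3 * n) m :=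
  (lowNode (yIdx3 n i) (0 : Fin (m + 2)), lowNode (yIdx3 n i) (1 : Fin (m + 2)))

/-- The arcs of the Theorem 4 graph: the variable–clause graph completed with
the arcs `(s₁,t₁)`, `(t₁,s₂)` and `(s₂,t₂)`. -/
def arcsRob (n m : ℕ) (F : Fin m → List (Fin (3 * n) × Bool)) :
    Set (Node (3 * n) m × Node (3 * n) m) :=
  baseArcs F ∪ {((Node.s1 : Node (3 * n) m), Node.t1), (Node.t1, s2), (s2, t2m n m)}

open Classical in
/-- The first-stage costs: `C_e = 0` if `e ∈ {(s₁,t₁),(t₁,s₂),(s₂,t₂)}` or `e`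
is an arc of an `𝕏`-variable gadget, `C_e = 1` otherwise. -/
noncomputable def Cfs (n m : ℕ) : Node (3 * n) m × Node (3 * n) m → ℝ :=
  fun e => if e = ((Node.s1 : Node (3 * n) m), Node.t1) ∨ e = (Node.t1, s2) ∨
              e = (s2, t2m n m) ∨
              (∃ i : Fin n, e ∈ upperArcs (xIdx3 n i) ∪ lowerArcs (xIdx3 n i))
           then 0 else 1

open Classical in
/-- The nominal second-stage costs: `ĉ_e = 1` for `e ∈ {(s₁,t₁),(s₂,t₂)}`,
`ĉ_e = 0` otherwise. -/
noncomputable def chat3 (n m : ℕ) : Node (3 * n) m × Node (3 * n) m → ℝ :=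
  fun e => if e = ((Node.s1 : Node (3 * n) m), Node.t1) ∨ e = (s2, t2m n m)
           then 1 else 0

open Classical in
/-- The upper bounds on the second-stage costs: `c̄_e = 1` for
`e ∈ {(s₁,t₁),(s₂,t₂)} ∪ A_y`, `c̄_e = 0` otherwise. -/
noncomputable def cbar3 (n m : ℕ) : Node (3 * n) m × Node (3 * n) m → ℝ :=
  fun e => if e = ((Node.s1 : Node (3 * n) m), Node.t1) ∨ e = (s2, t2m n m) ∨
              (∃ i : Fin n, e = ey3 n m i) then 1 else 0

/-- `Û(Γ)`: extreme scenarios with at most `Γ` arcs at their upper bounds. -/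
def Uhat3 (n m Γ : ℕ) : Set ((Node (3 * n) m × Node (3 * n) m) → ℝ) :=
  { c | (∀ e, c e = chat3 n m e ∨ c e = cbar3 n m e) ∧
        { e | c e ≠ chat3 n m e }.ncard ≤ Γ }

/-! A path of first-stage cost `0` uses only cost-`0` arcs. Out of `s₁`, `t₁`, `s₂` and every
inner node of an `𝕏`-gadget there is exactly one such arc, and none leaves `t₂'`; the only
choice is made at the entry junction of each `𝕏`-gadget, between its upper and lower path.
So the path is `s₁ t₁ s₂ t₂` followed by one branch of every `𝕏`-gadget, in order. Since
`m > 0`, the first arc of the lower path of `x_i` ends at an inner node and hence lies on no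
other branch, so the arc set determines the branch taken in every gadget. -/

theorem iUnion_le_update_eq {ι α β : Type*} [PartialOrder ι] [DecidableEq ι]
    (s : ι → α → Set β) (x : ι → α) (i : ι) (a : α) :
    ⋃ (j) (_ : i ≤ j), s j (Function.update x i a j) =
      s i a ∪ ⋃ (j) (_ : i < j), s j (x j) := by
  ext e
  simp only [Set.mem_iUnion, Set.mem_union, le_iff_eq_or_lt, exists_prop, or_and_right,
    exists_or, exists_eq_left', Function.update_self]
  refine or_congr_right (exists_congr fun j => and_congr_right fun hij => ?_)
  rw [Function.update_of_ne hij.ne']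

section Walks

variable {V : Type*} [DecidableEq V] {R : V → V → Prop}

theorem pathArcs_cons_cons (u v : V) (l : List V) :
    pathArcs (u :: v :: l) = insert (u, v) (pathArcs (v :: l)) := by
  simp [pathArcs]

theorem isChain_of_forall_mem_pathArcs :
    ∀ {l : List V}, (∀ u v, (u, v) ∈ pathArcs l → R u v) → l.IsChain R
  | [], _ => List.isChain_nil
  | [_], _ => List.isChain_singleton _
  | u :: v :: l, h => by
    rw [List.isChain_cons_cons]
    refine ⟨h u v (by simp [pathArcs_cons_cons]),
      isChain_of_forall_mem_pathArcs fun a b hab => h a b ?_⟩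
    rw [pathArcs_cons_cons]
    exact Finset.mem_insert_of_mem hab

theorem exists_pathArcs_eq_of_forced {t : V} :
    ∀ {d : ℕ} (f : Fin (d + 1) → V),
      (∀ k : Fin d, ∀ v, R (f k.castSucc) v → v = f k.succ) →
      (∀ k : Fin d, f k.castSucc ≠ t) →
      ∀ {r : List V}, (f 0 :: r).IsChain R → (f 0 :: r).getLast? = some t →
      ∃ r', (f (Fin.last d) :: r').IsChain R ∧ (f (Fin.last d) :: r').getLast? = some t ∧
        (pathArcs (f 0 :: r) : Set (V × V)) =
          Set.range (fun k : Fin d => (f k.castSucc, f k.succ)) ∪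
            pathArcs (f (Fin.last d) :: r')
  | 0, f, _, _, r, hchain, hlast => ⟨r, hchain, hlast, by simp⟩
  | d + 1, f, hforced, hne, [], _, hlast => absurd (Option.some.inj hlast) (hne 0)
  | d + 1, f, hforced, hne, v :: r, hchain, hlast => by
    rw [List.isChain_cons_cons] at hchain
    obtain rfl := hforced 0 v hchain.1
    obtain ⟨r', hchain', hlast', harcs⟩ := exists_pathArcs_eq_of_forced (Fin.tail f)
      (fun k v hv => hforced k.succ v (by rwa [← Fin.succ_castSucc]))
      (fun k => by rw [Fin.tail, Fin.succ_castSucc]; exact hne k.succ)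
      hchain.2 (by rwa [List.getLast?_cons_cons] at hlast)
    simp only [Fin.tail, Fin.succ_last] at hchain' hlast' harcs
    refine ⟨r', hchain', hlast', ?_⟩
    rw [pathArcs_cons_cons, Finset.coe_insert, harcs, Fin.range_fin_succ, Set.insert_union]
    simp only [Fin.succ_castSucc]
    rfl

end Walks

section Gadget

def branchNode (w : Fin N) : Bool → Fin (m + 2) → Node N m
  | false => upNode w
  | true => lowNode w

def branchArcs (w : Fin N) (b : Bool) : Set (Node N m × Node N m) :=
  if b then lowerArcs w else upperArcs w

theorem branchArcs_eq_range (w : Fin N) (b : Bool) :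
    branchArcs (m := m) w b =
      Set.range fun k : Fin (m + 1) => (branchNode w b k.castSucc, branchNode w b k.succ) := by
  cases b <;> rfl

theorem branchNode_eq_junction_iff {w : Fin N} {b : Bool} {k : Fin (m + 2)} {J : Fin (N + 1)} :
    branchNode w b k = .junction J ↔
      (k = 0 ∧ J = w.castSucc) ∨ (k = Fin.last _ ∧ J = w.succ) := by
  cases b <;> simp only [branchNode, upNode, lowNode] <;> split_ifs <;>
    simp only [Node.junction.injEq, false_iff, Fin.ext_iff, Fin.val_zero,
      Fin.val_last, Fin.val_castSucc, Fin.val_succ] <;> omega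

@[simp]
theorem branchNode_zero (w : Fin N) (b : Bool) :
    branchNode (m := m) w b 0 = .junction w.castSucc :=
  branchNode_eq_junction_iff.2 (Or.inl ⟨rfl, rfl⟩)

@[simp]
theorem branchNode_last (w : Fin N) (b : Bool) :
    branchNode (m := m) w b (Fin.last _) = .junction w.succ :=
  branchNode_eq_junction_iff.2 (Or.inr ⟨rfl, rfl⟩)

theorem branchNode_inj_of_ne {w w' : Fin N} {b b' : Bool} {k k' : Fin (m + 2)}
    (h0 : k ≠ 0) (hlast : k ≠ Fin.last _) (h : branchNode w b k = branchNode w' b' k') :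
    w = w' ∧ b = b' ∧ k = k' := by
  rw [Ne, Fin.ext_iff] at h0 hlast
  cases b <;> cases b' <;> simp only [branchNode, upNode, lowNode] at h <;> split_ifs at h <;>
    simp_all [Fin.ext_iff] <;> omega

theorem branchNode_ne_s1 {w : Fin N} {b : Bool} {k : Fin (m + 2)} :
    branchNode w b k ≠ .s1 := by
  cases b <;> simp only [branchNode, upNode, lowNode] <;> split_ifs <;> simp

theorem branchNode_ne_t1 {w : Fin N} {b : Bool} {k : Fin (m + 2)} :
    branchNode w b k ≠ .t1 := by
  cases b <;> simp only [branchNode, upNode, lowNode] <;> split_ifs <;> simp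

end Gadget

theorem xIdx3_strictMono (n : ℕ) : StrictMono (xIdx3 n) := by
  intro i j h
  simp only [xIdx3, Fin.mk_lt_mk]
  omega

section ZeroCost

variable {n : ℕ} {v : Node (3 * n) m}

theorem Cfs_nonneg (e : Node (3 * n) m × Node (3 * n) m) : 0 ≤ Cfs n m e := by
  unfold Cfs
  split_ifs <;> norm_num

theorem arc_cases_of_Cfs_eq_zero {u : Node (3 * n) m} (h : Cfs n m (u, v) = 0) :
    (u = .s1 ∧ v = .t1) ∨ (u = .t1 ∧ v = s2) ∨ (u = s2 ∧ v = t2m n m) ∨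
      ∃ i b, ∃ k : Fin (m + 1),
        u = branchNode (xIdx3 n i) b k.castSucc ∧ v = branchNode (xIdx3 n i) b k.succ := by
  unfold Cfs at h
  split_ifs at h with hzero
  · rcases hzero with h | h | h | ⟨i, ⟨k, hk⟩ | ⟨k, hk⟩⟩
    · exact Or.inl (Prod.mk.inj h)
    · exact Or.inr (Or.inl (Prod.mk.inj h))
    · exact Or.inr (Or.inr (Or.inl (Prod.mk.inj h)))
    · obtain ⟨rfl, rfl⟩ := Prod.mk.inj hk
      exact Or.inr (Or.inr (Or.inr ⟨i, false, k, rfl, rfl⟩))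
    · obtain ⟨rfl, rfl⟩ := Prod.mk.inj hk
      exact Or.inr (Or.inr (Or.inr ⟨i, true, k, rfl, rfl⟩))
  · norm_num at h

theorem eq_t1_of_Cfs_s1 (h : Cfs n m (.s1, v) = 0) : v = .t1 := by
  rcases arc_cases_of_Cfs_eq_zero h with
    ⟨-, rfl⟩ | ⟨h, -⟩ | ⟨h, -⟩ | ⟨i, b, k, h, -⟩
  · rfl
  · simp at h
  · simp [s2] at h
  · exact absurd h.symm branchNode_ne_s1

theorem eq_s2_of_Cfs_t1 (h : Cfs n m (.t1, v) = 0) : v = s2 := by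
  rcases arc_cases_of_Cfs_eq_zero h with
    ⟨h, -⟩ | ⟨-, rfl⟩ | ⟨h, -⟩ | ⟨i, b, k, h, -⟩
  · simp at h
  · rfl
  · simp [s2] at h
  · exact absurd h.symm branchNode_ne_t1

theorem exists_branch_of_Cfs_junction {J : Fin (3 * n + 1)} (hJ : J ≠ 0)
    (h : Cfs n m (.junction J, v) = 0) :
    ∃ i b, J = (xIdx3 n i).castSucc ∧ v = branchNode (xIdx3 n i) b 1 := by
  rcases arc_cases_of_Cfs_eq_zero h with
    ⟨h, -⟩ | ⟨h, -⟩ | ⟨h, -⟩ | ⟨i, b, k, hu, rfl⟩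
  · simp at h
  · simp at h
  · simp [s2] at h
    exact absurd h hJ
  · rcases branchNode_eq_junction_iff.1 hu.symm with ⟨hk, rfl⟩ | ⟨hk, -⟩
    · obtain rfl : k = 0 := Fin.castSucc_eq_zero_iff.1 hk
      exact ⟨i, b, rfl, rfl⟩
    · exact absurd hk (Fin.castSucc_ne_last k)

theorem eq_t2m_of_Cfs_s2 (hn : 0 < n) (h : Cfs n m (s2, v) = 0) : v = t2m n m := by
  rcases arc_cases_of_Cfs_eq_zero h with
    ⟨h, -⟩ | ⟨h, -⟩ | ⟨-, rfl⟩ | ⟨i, b, k, h, -⟩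
  · simp [s2] at h
  · simp [s2] at h
  · rfl
  · rcases branchNode_eq_junction_iff.1 h.symm with ⟨-, h⟩ | ⟨-, h⟩
    · simp only [Fin.ext_iff, Fin.val_zero, Fin.val_castSucc, xIdx3] at h
      exact absurd h.symm (Nat.add_pos_left (Nat.mul_pos two_pos hn) _).ne'
    · simp [Fin.ext_iff] at h

theorem eq_succ_of_Cfs_branchNode {i : Fin n} {b : Bool} {k : Fin (m + 1)} (hk : k ≠ 0)
    (h : Cfs n m (branchNode (xIdx3 n i) b k.castSucc, v) = 0) :
    v = branchNode (xIdx3 n i) b k.succ := by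
  have hinner : k.castSucc ≠ 0 := by simpa [Fin.castSucc_eq_zero_iff] using hk
  rcases arc_cases_of_Cfs_eq_zero h with
    ⟨h, -⟩ | ⟨h, -⟩ | ⟨h, -⟩ | ⟨i', b', k', hu, rfl⟩
  · exact absurd h branchNode_ne_s1
  · exact absurd h branchNode_ne_t1
  · simp only [s2] at h
    rcases branchNode_eq_junction_iff.1 h with ⟨h, -⟩ | ⟨h, -⟩
    · exact absurd h hinner
    · exact absurd h (Fin.castSucc_ne_last k)
  · obtain ⟨hw, rfl, hkk⟩ := branchNode_inj_of_ne hinner (Fin.castSucc_ne_last k) hu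
    obtain rfl := (xIdx3_strictMono n).injective hw
    obtain rfl := Fin.castSucc_injective _ hkk
    rfl

end ZeroCost

def assignmentPathArcs (n m : ℕ) (x : Fin n → Bool) : Set (Node (3 * n) m × Node (3 * n) m) :=
  {((Node.s1 : Node (3 * n) m), Node.t1), (Node.t1, s2), (s2, t2m n m)} ∪
    ⋃ i, branchArcs (xIdx3 n i) (x i)

section Traversal

variable {n : ℕ}

local notation "ZeroCost" => fun u v => Cfs n m (u, v) = 0

theorem exists_pathArcs_eq_across_gadget {i : Fin n} {b : Bool} {r : List (Node (3 * n) m)}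
    (hchain : (.junction (xIdx3 n i).castSucc :: branchNode (xIdx3 n i) b 1 :: r).IsChain ZeroCost)
    (hlast : (.junction (xIdx3 n i).castSucc :: branchNode (xIdx3 n i) b 1 :: r).getLast? =
      some (t2' n m)) :
    ∃ r', (.junction (xIdx3 n i).succ :: r').IsChain ZeroCost ∧
      (.junction (xIdx3 n i).succ :: r').getLast? = some (t2' n m) ∧
      (pathArcs (.junction (xIdx3 n i).castSucc :: branchNode (xIdx3 n i) b 1 :: r) :
        Set (Node (3 * n) m × Node (3 * n) m)) =
        branchArcs (xIdx3 n i) b ∪ ↑(pathArcs (.junction (xIdx3 n i).succ :: r')) := by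
  set w := xIdx3 n i
  rw [List.isChain_cons_cons] at hchain
  rw [List.getLast?_cons_cons] at hlast
  obtain ⟨r', hchain', hlast', harcs⟩ :=
    exists_pathArcs_eq_of_forced (fun k : Fin (m + 1) => branchNode w b k.succ)
      (fun k v hv => eq_succ_of_Cfs_branchNode (Fin.succ_ne_zero k)
        (by rwa [← Fin.succ_castSucc]))
      (fun k hk => by
        rcases branchNode_eq_junction_iff.1 hk with ⟨h, -⟩ | ⟨h, -⟩
        · exact Fin.succ_ne_zero _ h
        · exact Fin.castSucc_ne_last k (Fin.succ_injective _ (h.trans (Fin.succ_last m).symm)))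
      hchain.2 hlast
  simp only [Fin.succ_zero_eq_one, Fin.succ_last, branchNode_last] at hchain' hlast' harcs
  refine ⟨r', hchain', hlast', ?_⟩
  rw [pathArcs_cons_cons, Finset.coe_insert, harcs, branchArcs_eq_range, Fin.range_fin_succ,
    Set.insert_union]
  simp only [Fin.castSucc_zero, Fin.succ_zero_eq_one, branchNode_zero, Fin.succ_castSucc]
  rfl

theorem exists_pathArcs_eq_from_junction (J : Fin (3 * n + 1)) (hJ : J ≠ 0)
    {r : List (Node (3 * n) m)} (hchain : (.junction J :: r).IsChain ZeroCost)
    (hlast : (.junction J :: r).getLast? = some (t2' n m)) :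
    ∃ x : Fin n → Bool, (pathArcs (.junction J :: r) : Set (Node (3 * n) m × Node (3 * n) m)) =
      ⋃ (i) (_ : J ≤ (xIdx3 n i).castSucc), branchArcs (xIdx3 n i) (x i) := by
  induction J using Fin.reverseInduction generalizing r with
  | last =>
    cases r with
    | nil =>
      have hnone (i : Fin n) : ¬Fin.last _ ≤ (xIdx3 n i).castSucc :=
        not_le.2 (Fin.castSucc_lt_last _)
      exact ⟨fun _ => false, by simp [pathArcs, hnone]⟩
    | cons v r =>
      rw [List.isChain_cons_cons] at hchain
      obtain ⟨i, b, h, -⟩ := exists_branch_of_Cfs_junction hJ hchain.1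
      exact absurd h.symm (Fin.castSucc_ne_last _)
  | cast w ih =>
    cases r with
    | nil =>
      simp only [List.getLast?_singleton, Option.some.injEq, t2', Node.junction.injEq] at hlast
      exact absurd hlast (Fin.castSucc_ne_last w)
    | cons v r =>
      obtain ⟨i, b, hw, rfl⟩ :=
        exists_branch_of_Cfs_junction hJ (List.isChain_cons_cons.1 hchain).1
      obtain rfl := Fin.castSucc_injective _ hw
      obtain ⟨r', hchain', hlast', harcs⟩ := exists_pathArcs_eq_across_gadget hchain hlast
      obtain ⟨x, hx⟩ := ih (Fin.succ_ne_zero _) hchain' hlast'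
      refine ⟨Function.update x i b, ?_⟩
      simp only [Fin.castSucc_le_castSucc_iff, Fin.succ_le_castSucc_iff,
        (xIdx3_strictMono n).le_iff_le, (xIdx3_strictMono n).lt_iff_lt] at hx ⊢
      rw [harcs, hx, iUnion_le_update_eq (fun j => branchArcs (xIdx3 n j))]

theorem exists_pathArcs_eq_assignmentPathArcs (hn : 0 < n) {p : List (Node (3 * n) m)}
    (hchain : p.IsChain ZeroCost) (hhead : p.head? = some .s1)
    (hlast : p.getLast? = some (t2' n m)) :
    ∃ x, (pathArcs p : Set (Node (3 * n) m × Node (3 * n) m)) = assignmentPathArcs n m x := by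
  obtain ⟨r, rfl⟩ : ∃ r, p = .s1 :: r := List.head?_eq_some_iff.1 hhead
  have hJ : (⟨2 * n, by omega⟩ : Fin (3 * n + 1)) ≠ 0 := by
    simp [Fin.ext_iff]
    omega
  have hforced (k : Fin 3) (v : Node (3 * n) m)
      (hv : Cfs n m (![.s1, .t1, s2, t2m n m] k.castSucc, v) = 0) :
      v = ![.s1, .t1, s2, t2m n m] k.succ := by
    fin_cases k <;> simp at hv ⊢
    exacts [eq_t1_of_Cfs_s1 hv, eq_s2_of_Cfs_t1 hv, eq_t2m_of_Cfs_s2 hn hv]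
  have hne (k : Fin 3) : ![.s1, .t1, s2, t2m n m] k.castSucc ≠ t2' n m := by
    fin_cases k <;> simp [s2, t2', Fin.ext_iff, hn.ne']
  obtain ⟨r', hchain', hlast', harcs⟩ := exists_pathArcs_eq_of_forced _ hforced hne hchain hlast
  obtain ⟨x, hx⟩ := exists_pathArcs_eq_from_junction _ hJ hchain' hlast'
  have hall (i : Fin n) : (⟨2 * n, by omega⟩ : Fin (3 * n + 1)) ≤ (xIdx3 n i).castSucc := by
    simp [Fin.le_iff_val_le_val, xIdx3]
  simp only [Matrix.cons_val_zero, Matrix.cons_val_succ, Fin.reduceLast, Matrix.cons_val,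
    t2m] at harcs
  refine ⟨x, ?_⟩
  rw [harcs, hx]
  simp [assignmentPathArcs, hall, Fin.range_fin_succ, Fin.tail, t2m]

end Traversal

theorem entryArc_mem_assignmentPathArcs_iff {n : ℕ} (hm : 0 < m) (x : Fin n → Bool)
    (i : Fin n) :
    (.junction (xIdx3 n i).castSucc, branchNode (xIdx3 n i) true 1) ∈ assignmentPathArcs n m x ↔
      x i = true := by
  have h1 : (1 : Fin (m + 2)) ≠ 0 := by simp
  have h1' : (1 : Fin (m + 2)) ≠ Fin.last _ := by simp [Fin.ext_iff]; omega
  have hjunction {J} : branchNode (xIdx3 n i) true 1 ≠ .junction J := fun h => by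
    rcases branchNode_eq_junction_iff.1 h with ⟨h, -⟩ | ⟨h, -⟩
    exacts [h1 h, h1' h]
  constructor
  · simp only [assignmentPathArcs, Set.mem_union, Set.mem_insert_iff, Set.mem_singleton_iff,
      Set.mem_iUnion, branchArcs_eq_range, Set.mem_range, Prod.mk.injEq]
    rintro ((⟨-, h⟩ | ⟨-, h⟩ | ⟨-, h⟩) | ⟨i', k, -, h⟩)
    · exact absurd h branchNode_ne_t1
    · exact absurd h hjunction
    · exact absurd h hjunction
    · obtain ⟨hw, hb, -⟩ := branchNode_inj_of_ne h1 h1' h.symm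
      obtain rfl := (xIdx3_strictMono n).injective hw
      exact hb.symm
  · intro hx
    refine Or.inr (Set.mem_iUnion.2 ⟨i, ?_⟩)
    rw [hx, branchArcs_eq_range]
    exact ⟨0, by simp⟩

theorem assignmentPathArcs_injective {n : ℕ} (hm : 0 < m) :
    Function.Injective (assignmentPathArcs n m) := fun x y h => funext fun i =>
  Bool.eq_iff_iff.2 <| (entryArc_mem_assignmentPathArcs_iff hm x i).symm.trans <|
    h ▸ entryArc_mem_assignmentPathArcs_iff hm y i

theorem stmt12_general (n m : ℕ) (hn : 0 < n) (hm : 0 < m)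
    (F : Fin m → List (Fin (3 * n) × Bool)) :
    ∀ X ∈ Phi (arcsRob n m F) (Node.s1 : Node (3 * n) m) (t2' n m),
      ∑ e ∈ X, Cfs n m e = 0 →
      ∃! x : Fin n → Bool,
        (↑X : Set (Node (3 * n) m × Node (3 * n) m)) =
          {((Node.s1 : Node (3 * n) m), Node.t1), (Node.t1, s2), (s2, t2m n m)} ∪
          ⋃ i : Fin n, (if x i then lowerArcs (xIdx3 n i) else upperArcs (xIdx3 n i)) := by
  rintro X ⟨p, ⟨-, hhead, hlast, -⟩, rfl⟩ hsum
  have hzero : ∀ e ∈ pathArcs p, Cfs n m e = 0 :=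
    (Finset.sum_eq_zero_iff_of_nonneg fun e _ => Cfs_nonneg e).1 hsum
  obtain ⟨x, hx⟩ := exists_pathArcs_eq_assignmentPathArcs hn
    (isChain_of_forall_mem_pathArcs fun u v huv => hzero _ huv) hhead hlast
  exact ⟨x, hx, fun y hy => assignmentPathArcs_injective hm (hy.symm.trans hx)⟩

/-- structure of zero-first-stage-cost paths in the
Theorem 4 construction.  Every path `X ∈ Φ` with first-stage cost
`∑_{e ∈ X} C_e = 0` consists of the arcs `(s₁,t₁)`, `(t₁,s₂)`, `(s₂,t₂)`
followed by a simple `t₂`–`t₂'` subpath using only arcs of the `𝕏`-variable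
gadgets, which for each `i` traverses exactly one of the two internally
node-disjoint paths of the gadget of `x_i`; therefore `X` uniquely determines
a 0-1 assignment `x` of `𝕏` (`x_i := 1` if the lower path is used, `x_i := 0`
if the upper path is used). -/
theorem stmt12 (n m : ℕ) (hn : 0 < n) (hm : 0 < m)
    (F : Fin m → List (Fin (3 * n) × Bool)) (h3 : ∀ j, (F j).length = 3) :
    ∀ X ∈ Phi (arcsRob n m F) (Node.s1 : Node (3 * n) m) (t2' n m),
      ∑ e ∈ X, Cfs n m e = 0 →
      ∃! x : Fin n → Bool,
        (↑X : Set (Node (3 * n) m × Node (3 * n) m)) =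
          {((Node.s1 : Node (3 * n) m), Node.t1), (Node.t1, s2), (s2, t2m n m)} ∪
          ⋃ i : Fin n, (if x i then lowerArcs (xIdx3 n i) else upperArcs (xIdx3 n i)) :=
  stmt12_general n m hn hm F

end RRSP
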